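/- With υ_∞(z) = log(8/(1+|z|²)²) and ω⁰_∞ as defined by the explicit formula (1/2)υ_∞² + 6 log(|y|²+1) + (2 log 8 − 10)/(|y|²+1) + ((|y|²−1)/(|y|²+1))(4∫_{|y|²}^∞ log(s+1)/(s(s+1)) ds − 2 log²(|y|²+1) − (1/2) log²8), one has (1/(8π)) ∫_{ℝ²} 8(1+|z|²)^{-2} [ (1/2)υ_∞(z)² − ω⁰_∞(z) ] dz = 3 − log 8. -/

import Mathlib

/-!
The integrand depends only on `t = |z|²`, and in polar coordinates
`∫_{ℝ²} F(|z|²) dz = π ∫_0^∞ F(t) dt`. Writing `g(t)` for the bracket multiplying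
`(t - 1)/(t + 1)` in `ω⁰_∞`, one has `g'(t) = -4 log(t + 1)/t`, and the radial profile `F`
has the explicit antiderivative
`H(t) = 16 (log(t + 1) + 1)/(t + 1) + (8 log 8 - 40)/(t + 1)² + 8 t g(t)/(t + 1)²`.
The tail integral in `g` is bounded and `log` grows slower than `√t`, so
`F(t) = O(t^{-3/2})` and `H(t) = O(t^{-1/2})`; hence `∫_0^∞ F = -H(0) = 24 - 8 log 8`, and
`(1/(8π)) · π · (24 - 8 log 8) = 3 - log 8`.
-/

open MeasureTheory Real

/-- `υ_∞(z) = log(8/(1+|z|²)²)`. -/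
noncomputable def upsilon (z : ℝ × ℝ) : ℝ :=
  Real.log (8 / (1 + (z.1 ^ 2 + z.2 ^ 2)) ^ 2)

/-- The explicit function `ω⁰_∞`. -/
noncomputable def omega0 (y : ℝ × ℝ) : ℝ :=
  (1 / 2) * upsilon y ^ 2 + 6 * Real.log ((y.1 ^ 2 + y.2 ^ 2) + 1)
    + (2 * Real.log 8 - 10) / ((y.1 ^ 2 + y.2 ^ 2) + 1)
    + ((y.1 ^ 2 + y.2 ^ 2) - 1) / ((y.1 ^ 2 + y.2 ^ 2) + 1)
      * (4 * (∫ s in Set.Ioi (y.1 ^ 2 + y.2 ^ 2), Real.log (s + 1) / (s * (s + 1)))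
          - 2 * Real.log ((y.1 ^ 2 + y.2 ^ 2) + 1) ^ 2 - (1 / 2) * Real.log 8 ^ 2)

open Set Filter Topology

theorem integral_comp_sq_add_sq {E : Type*} [NormedAddCommGroup E] [NormedSpace ℝ E]
    (f : ℝ → E) : ∫ z : ℝ × ℝ, f (z.1 ^ 2 + z.2 ^ 2) = π • ∫ t in Ioi 0, f t := by
  have hpolar : ∀ p : ℝ × ℝ,
      (polarCoord.symm p).1 ^ 2 + (polarCoord.symm p).2 ^ 2 = p.1 ^ 2 := fun p => by
    simp only [polarCoord_symm_apply, mul_pow, ← mul_add, cos_sq_add_sin_sq, mul_one]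
  have hsubst : ∫ r in Ioi 0, r • f (r ^ 2) = (1 / 2 : ℝ) • ∫ t in Ioi 0, f t := by
    rw [← integral_comp_rpow_Ioi f two_ne_zero, ← integral_smul]
    refine setIntegral_congr_fun measurableSet_Ioi fun r _ => ?_
    norm_num [smul_smul, ← mul_assoc]
  rw [← integral_comp_polarCoord_symm, polarCoord_target, Measure.volume_eq_prod,
    ← Measure.prod_restrict]
  simp only [hpolar]
  rw [integral_fun_fst (fun r => r • f (r ^ 2)), hsubst, smul_smul]
  simp only [measureReal_restrict_apply MeasurableSet.univ, univ_inter, volume_real_Ioo,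
    sub_neg_eq_add, nonneg_add_self_iff, pi_pos.le, sup_of_le_left]
  congr 1
  ring

theorem hasDerivAt_integral_Ioi {E : Type*} [NormedAddCommGroup E] [NormedSpace ℝ E]
    [CompleteSpace E] {f : ℝ → E} {a t : ℝ} (hf : IntegrableOn f (Ioi a)) (hat : a < t)
    (hft : ContinuousAt f t) : HasDerivAt (fun b => ∫ x in Ioi b, f x) (-f t) t := by
  have hint : IntervalIntegrable f volume a t :=
    (intervalIntegrable_iff_integrableOn_Ioc_of_le hat.le).2 (hf.mono_set Ioc_subset_Ioi_self)
  have hmeas : StronglyMeasurableAtFilter f (𝓝 t) := ⟨Ioi a, Ioi_mem_nhds hat, hf.1⟩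
  refine ((intervalIntegral.integral_hasDerivAt_right hint hmeas hft).const_sub
    (∫ x in Ioi a, f x)).congr_of_eventuallyEq ?_
  filter_upwards [Ioi_mem_nhds hat] with b hb
  rw [← intervalIntegral.integral_Ioi_sub_Ioi hf hb.le, sub_sub_cancel]

lemma log_le_two_mul_sqrt {x : ℝ} (hx : 0 ≤ x) : log x ≤ 2 * √x := by
  have h := log_le_rpow_div hx one_half_pos
  rw [← sqrt_eq_rpow] at h
  linarith

lemma log_sq_le_sixteen_mul_sqrt {x : ℝ} (hx : 1 ≤ x) : log x ^ 2 ≤ 16 * √x := by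
  have hlog : log x ≤ 4 * √(√x) := by
    have := log_le_two_mul_sqrt (sqrt_nonneg x)
    rw [log_sqrt (zero_le_one.trans hx)] at this
    linarith
  calc log x ^ 2 ≤ (4 * √(√x)) ^ 2 := pow_le_pow_left₀ (log_nonneg hx) hlog 2
    _ = 16 * √x := by rw [mul_pow, sq_sqrt (sqrt_nonneg x)]; norm_num

lemma integrableOn_sqrt_add_one_div_sq :
    IntegrableOn (fun t : ℝ => √(t + 1) / (t + 1) ^ 2) (Ioi 0) := by
  refine (integrableOn_add_rpow_Ioi_of_lt (by norm_num : (-3/2 : ℝ) < -1)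
    (by norm_num : -(1 : ℝ) < 0)).congr_fun (fun t (ht : 0 < t) => ?_) measurableSet_Ioi
  dsimp only
  rw [sqrt_eq_rpow, show (-3/2 : ℝ) = 1/2 - (2 : ℕ) by norm_num, rpow_sub (by linarith),
    rpow_natCast]

lemma integrableOn_Ioi_of_abs_le_mul_sqrt_div_sq {f : ℝ → ℝ}
    (hf : AEStronglyMeasurable f (volume.restrict (Ioi 0))) (C : ℝ)
    (hbound : ∀ t, 0 < t → |f t| ≤ C * (√(t + 1) / (t + 1) ^ 2)) :
    IntegrableOn f (Ioi 0) := by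
  refine (integrableOn_sqrt_add_one_div_sq.const_mul C).mono' hf ?_
  filter_upwards [ae_restrict_mem measurableSet_Ioi] with t ht
  exact hbound t ht

noncomputable def logKernel (s : ℝ) : ℝ := log (s + 1) / (s * (s + 1))

lemma logKernel_nonneg {s : ℝ} (hs : 0 ≤ s) : 0 ≤ logKernel s :=
  div_nonneg (log_nonneg (by linarith)) (by positivity)

lemma logKernel_le {s : ℝ} (hs : 0 < s) : logKernel s ≤ 4 * (√(s + 1) / (s + 1) ^ 2) := by
  have hB := sq_sqrt (by linarith : 0 ≤ s + 1)
  have hB1 : 1 ≤ √(s + 1) := one_le_sqrt.2 (by linarith)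
  have hlog_le_self : log (s + 1) ≤ s := by
    linarith [log_le_sub_one_of_pos (by linarith : 0 < s + 1)]
  have hlog_le_sqrt := log_le_two_mul_sqrt (by linarith : 0 ≤ s + 1)
  have hlog_nonneg : 0 ≤ log (s + 1) := log_nonneg (by linarith)
  have hcleared : log (s + 1) * (s + 1) ≤ 4 * √(s + 1) * s := by
    rcases le_total s 1 with hs1 | hs1
    · nlinarith [mul_le_mul_of_nonneg_right hlog_le_self (by linarith : 0 ≤ s + 1)]
    · nlinarith [mul_le_mul_of_nonneg_right hlog_le_sqrt (by linarith : 0 ≤ s + 1)]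
  rw [logKernel, mul_div_assoc', div_le_div_iff₀ (by positivity) (by positivity)]
  nlinarith

lemma integrableOn_logKernel : IntegrableOn logKernel (Ioi 0) :=
  integrableOn_Ioi_of_abs_le_mul_sqrt_div_sq
    (by unfold logKernel; fun_prop : Measurable logKernel).aestronglyMeasurable 4 fun s hs => by
      rw [abs_of_nonneg (logKernel_nonneg hs.le)]; exact logKernel_le hs

lemma continuousAt_logKernel {s : ℝ} (hs : 0 < s) : ContinuousAt logKernel s := by
  unfold logKernel
  have : s + 1 ≠ 0 := by positivity
  have : s * (s + 1) ≠ 0 := by positivity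
  fun_prop (disch := assumption)

noncomputable def logTail (t : ℝ) : ℝ := ∫ s in Ioi t, logKernel s

lemma abs_logTail_le {t : ℝ} (ht : 0 ≤ t) : |logTail t| ≤ logTail 0 := by
  have hnonneg : 0 ≤ logTail t :=
    setIntegral_nonneg measurableSet_Ioi fun s hs => logKernel_nonneg (ht.trans hs.le)
  rw [abs_of_nonneg hnonneg]
  exact setIntegral_mono_set integrableOn_logKernel
    ((ae_restrict_mem measurableSet_Ioi).mono fun s hs => logKernel_nonneg (le_of_lt hs))
    (Ioi_subset_Ioi ht).eventuallyLE

noncomputable def omegaBracket (t : ℝ) : ℝ :=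
  4 * logTail t - 2 * log (t + 1) ^ 2 - 1 / 2 * log 8 ^ 2

lemma exists_abs_omegaBracket_le :
    ∃ K, 0 ≤ K ∧ ∀ t, 0 ≤ t → |omegaBracket t| ≤ K * √(t + 1) := by
  have htail0 : 0 ≤ logTail 0 := (abs_nonneg _).trans (abs_logTail_le le_rfl)
  refine ⟨4 * logTail 0 + 32 + log 8 ^ 2 / 2, by positivity, fun t ht => ?_⟩
  have hB1 : 1 ≤ √(t + 1) := one_le_sqrt.2 (by linarith)
  have hlog := log_sq_le_sixteen_mul_sqrt (by linarith : 1 ≤ t + 1)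
  have htail := abs_le.1 (abs_logTail_le ht)
  rw [omegaBracket, abs_le]
  constructor <;> nlinarith [sq_nonneg (log (t + 1)), sq_nonneg (log 8),
    mul_le_mul_of_nonneg_left hB1 htail0, mul_le_mul_of_nonneg_left hB1 (sq_nonneg (log 8))]

lemma hasDerivAt_omegaBracket {t : ℝ} (ht : 0 < t) :
    HasDerivAt omegaBracket (-4 * log (t + 1) / t) t := by
  have htail : HasDerivAt logTail (-logKernel t) t :=
    hasDerivAt_integral_Ioi integrableOn_logKernel ht (continuousAt_logKernel ht)
  have hlog : HasDerivAt (fun u => log (u + 1)) (1 / (t + 1)) t := by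
    simpa using ((hasDerivAt_id t).add_const 1).log (by positivity)
  refine (((htail.const_mul 4).sub ((hlog.fun_pow 2).const_mul 2)).sub_const
    (1 / 2 * log 8 ^ 2)).congr_deriv ?_
  rw [logKernel]
  field_simp
  ring

lemma continuousOn_omegaBracket : ContinuousOn omegaBracket (Ici 0) := by
  have htail : ContinuousOn logTail (Ici 0) :=
    integrableOn_logKernel.continuousOn_Ici_primitive_Ioi
  unfold omegaBracket
  fun_prop (disch := intro t (ht : 0 ≤ t); positivity)

/-- The integrand `8 (1 + |z|²)⁻² (½ υ_∞² - ω⁰_∞)` as a function of `t = |z|²`; the `υ_∞²`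
terms cancel. -/
noncomputable def radialProfile (t : ℝ) : ℝ :=
  8 / (t + 1) ^ 2 *
    -(6 * log (t + 1) + (2 * log 8 - 10) / (t + 1) + (t - 1) / (t + 1) * omegaBracket t)

noncomputable def radialPrimitive (t : ℝ) : ℝ :=
  16 * (log (t + 1) + 1) / (t + 1) + (8 * log 8 - 40) / (t + 1) ^ 2
    + 8 * t * omegaBracket t / (t + 1) ^ 2

lemma hasDerivAt_radialPrimitive {t : ℝ} (ht : 0 < t) :
    HasDerivAt radialPrimitive (radialProfile t) t := by
  have ht1 : t + 1 ≠ 0 := by positivity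
  have hlog : HasDerivAt (fun u => log (u + 1)) (1 / (t + 1)) t := by
    simpa using ((hasDerivAt_id t).add_const 1).log ht1
  have hden : HasDerivAt (fun u : ℝ => u + 1) 1 t := (hasDerivAt_id t).add_const 1
  refine (((((hlog.add_const 1).const_mul 16).div hden ht1).add
    ((hasDerivAt_const t (8 * log 8 - 40)).div (hden.fun_pow 2) (pow_ne_zero 2 ht1))).add
    ((((hasDerivAt_id' t).const_mul 8).fun_mul (hasDerivAt_omegaBracket ht)).div (hden.fun_pow 2)
      (pow_ne_zero 2 ht1))).congr_deriv ?_
  rw [radialProfile]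
  field_simp
  ring

lemma continuousOn_radialProfile : ContinuousOn radialProfile (Ici 0) := by
  have := continuousOn_omegaBracket
  unfold radialProfile
  fun_prop (disch := intro t (ht : 0 ≤ t); positivity)

lemma continuousOn_radialPrimitive : ContinuousOn radialPrimitive (Ici 0) := by
  have := continuousOn_omegaBracket
  unfold radialPrimitive
  fun_prop (disch := intro t (ht : 0 ≤ t); positivity)

lemma exists_abs_radialProfile_le :
    ∃ C, ∀ t, 0 ≤ t → |radialProfile t| ≤ C * (√(t + 1) / (t + 1) ^ 2) := by
  obtain ⟨K, -, hK⟩ := exists_abs_omegaBracket_le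
  refine ⟨8 * (12 + |2 * log 8 - 10| + K), fun t ht => ?_⟩
  have hB1 : 1 ≤ √(t + 1) := one_le_sqrt.2 (by linarith)
  have hlog : |6 * log (t + 1)| ≤ 12 * √(t + 1) := by
    rw [abs_of_nonneg (mul_nonneg (by norm_num) (log_nonneg (by linarith)))]
    linarith [log_le_two_mul_sqrt (by linarith : 0 ≤ t + 1)]
  have hconst : |(2 * log 8 - 10) / (t + 1)| ≤ |2 * log 8 - 10| * √(t + 1) := by
    rw [abs_div, abs_of_pos (by positivity : 0 < t + 1)]
    calc |2 * log 8 - 10| / (t + 1) ≤ |2 * log 8 - 10| :=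
          div_le_self (abs_nonneg _) (by linarith)
      _ ≤ |2 * log 8 - 10| * √(t + 1) := le_mul_of_one_le_right (abs_nonneg _) hB1
  have hbracket : |(t - 1) / (t + 1) * omegaBracket t| ≤ K * √(t + 1) := by
    have hratio : |(t - 1) / (t + 1)| ≤ 1 := by
      rw [abs_div, abs_of_pos (by positivity : 0 < t + 1), div_le_one (by positivity)]
      exact abs_le.2 ⟨by linarith, by linarith⟩
    rw [abs_mul, ← one_mul (K * √(t + 1))]
    exact mul_le_mul hratio (hK t ht) (abs_nonneg _) zero_le_one
  calc |radialProfile t|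
      = 8 / (t + 1) ^ 2 *
        |6 * log (t + 1) + (2 * log 8 - 10) / (t + 1) + (t - 1) / (t + 1) * omegaBracket t| := by
        rw [radialProfile, abs_mul, abs_neg, abs_of_pos (by positivity)]
    _ ≤ 8 / (t + 1) ^ 2 * ((12 + |2 * log 8 - 10| + K) * √(t + 1)) := by
        gcongr
        linarith [abs_add_three (6 * log (t + 1)) ((2 * log 8 - 10) / (t + 1))
          ((t - 1) / (t + 1) * omegaBracket t)]
    _ = 8 * (12 + |2 * log 8 - 10| + K) * (√(t + 1) / (t + 1) ^ 2) := by ring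

lemma exists_abs_radialPrimitive_le :
    ∃ C, ∀ t, 0 ≤ t → |radialPrimitive t| ≤ C * (√(t + 1) / (t + 1)) := by
  obtain ⟨K, hK, hbracket⟩ := exists_abs_omegaBracket_le
  refine ⟨48 + |8 * log 8 - 40| + 8 * K, fun t ht => ?_⟩
  have ht1 : 0 < t + 1 := by positivity
  have hB1 : 1 ≤ √(t + 1) := one_le_sqrt.2 (by linarith)
  have hlog_nonneg : 0 ≤ log (t + 1) := log_nonneg (by linarith)
  have hlog := log_le_two_mul_sqrt ht1.le
  have hnum : |16 * (log (t + 1) + 1) * (t + 1) + (8 * log 8 - 40) + 8 * t * omegaBracket t|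
      ≤ (48 + |8 * log 8 - 40| + 8 * K) * √(t + 1) * (t + 1) := by
    have h1 : 16 * (log (t + 1) + 1) * (t + 1) ≤ 48 * √(t + 1) * (t + 1) :=
      mul_le_mul_of_nonneg_right (by linarith) ht1.le
    have h2 : |8 * log 8 - 40| ≤ |8 * log 8 - 40| * √(t + 1) * (t + 1) := by
      nlinarith [abs_nonneg (8 * log 8 - 40), mul_le_mul hB1 (by linarith : 1 ≤ t + 1)
        zero_le_one (by positivity : 0 ≤ √(t + 1))]
    have h3 : |8 * t * omegaBracket t| ≤ 8 * K * √(t + 1) * (t + 1) := by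
      rw [abs_mul, abs_of_nonneg (by positivity : 0 ≤ 8 * t)]
      nlinarith [mul_le_mul_of_nonneg_left (hbracket t ht) (by positivity : 0 ≤ 8 * t),
        mul_le_mul_of_nonneg_right (by linarith : t ≤ t + 1)
          (by positivity : 0 ≤ 8 * K * √(t + 1))]
    have h0 : 0 ≤ 16 * (log (t + 1) + 1) * (t + 1) := by positivity
    have := abs_add_three (16 * (log (t + 1) + 1) * (t + 1)) (8 * log 8 - 40)
      (8 * t * omegaBracket t)
    rw [abs_of_nonneg h0] at this
    linarith
  have hfrac : radialPrimitive t
      = (16 * (log (t + 1) + 1) * (t + 1) + (8 * log 8 - 40) + 8 * t * omegaBracket t)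
        / (t + 1) ^ 2 := by
    rw [radialPrimitive]; field_simp
  rw [hfrac, abs_div, abs_of_pos (by positivity : 0 < (t + 1) ^ 2), div_le_iff₀ (by positivity)]
  refine hnum.trans_eq ?_
  field_simp

lemma integrableOn_radialProfile : IntegrableOn radialProfile (Ioi 0) := by
  obtain ⟨C, hC⟩ := exists_abs_radialProfile_le
  exact integrableOn_Ioi_of_abs_le_mul_sqrt_div_sq
    ((continuousOn_radialProfile.mono Ioi_subset_Ici_self).aestronglyMeasurable measurableSet_Ioi)
    C fun t ht => hC t ht.le

lemma tendsto_radialPrimitive_atTop : Tendsto radialPrimitive atTop (𝓝 0) := by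
  obtain ⟨C, hC⟩ := exists_abs_radialPrimitive_le
  have hdecay : Tendsto (fun t : ℝ => C * (√(t + 1) / (t + 1))) atTop (𝓝 0) := by
    simp_rw [sqrt_div_self', one_div]
    simpa using (tendsto_inv_atTop_zero.comp (tendsto_sqrt_atTop.comp
      (tendsto_atTop_add_const_right _ 1 tendsto_id))).const_mul C
  refine squeeze_zero_norm' ?_ hdecay
  filter_upwards [eventually_ge_atTop 0] with t ht
  exact hC t ht

lemma integral_radialProfile : ∫ t in Ioi 0, radialProfile t = 24 - 8 * log 8 := by
  rw [integral_Ioi_of_hasDerivAt_of_tendsto (continuousOn_radialPrimitive 0 self_mem_Ici)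
    (fun t ht => hasDerivAt_radialPrimitive ht) integrableOn_radialProfile
    tendsto_radialPrimitive_atTop]
  norm_num [radialPrimitive]
  ring

theorem stmt17 :
    (1 / (8 * π)) * ∫ z : ℝ × ℝ,
        8 / (1 + (z.1 ^ 2 + z.2 ^ 2)) ^ 2 * ((1 / 2) * upsilon z ^ 2 - omega0 z)
      = 3 - Real.log 8 := by
  have hradial : ∀ z : ℝ × ℝ, 8 / (1 + (z.1 ^ 2 + z.2 ^ 2)) ^ 2
      * ((1 / 2) * upsilon z ^ 2 - omega0 z) = radialProfile (z.1 ^ 2 + z.2 ^ 2) := fun z => by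
    simp only [omega0, radialProfile, omegaBracket, logTail, logKernel]
    ring
  simp_rw [hradial]
  rw [integral_comp_sq_add_sq, integral_radialProfile, smul_eq_mul]
  field_simp
  ring
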